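/- arXiv:2311.09251 — 2 statements merged into one kernel-verified Lean document; each statement's English description precedes it below -/
import Mathlib

section
/- Stability of dilated unfolded embeddings (Theorem 1, instantiated to the inhomogeneous Bernoulli dynamic network model). Let n, T, d be positive natural numbers, let ι = Fin n ⊕ (Fin T × Fin n), let Ω be a countable type with seed law μ : PMF Ω, and let F : Matrix ι ι ℝ → Ω → (ι → (Fin d → ℝ)) be label-invariant with respect to μ. For each t : Fin T let P t : Matrix (Fin n) (Fin n) ℝ satisfy 0 ≤ (P t) k i ≤ 1 for all k, i, and set Q : Fin n → (Fin T × Fin n) → ℝ, Q k (t, i) = (P t) k i. Suppose u, t : Fin T and i, j : Fin n satisfy (P u) k i = (P t) k j for every k : Fin n. Then the embedded positions of node i at time u and node j at time t are exchangeable: for all v₁, v₂ : Fin d → ℝ, ∑_{b : Fin n → (Fin T × Fin n) → Bool} p_Q(b) · μ.toOuterMeasure {ω | F (D(b̂)) ω (Sum.inr (u, i)) = v₁ ∧ F (D(b̂)) ω (Sum.inr (t, j)) = v₂} = ∑_{b} p_Q(b) · μ.toOuterMeasure {ω | F (D(b̂)) ω (Sum.inr (u, i)) = v₂ ∧ F (D(b̂))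 ω (Sum.inr (t, j)) = v₁}. (Taking u = t gives spatial stability; taking i = j gives temporal stability.) -/
open Matrix

/-- The independent-Bernoulli mass function on Boolean arrays. -/
def bernoulliMass {I J : Type*} [Fintype I] [Fintype J]
    (Q : I → J → ℝ) (b : I → J → Bool) : ℝ :=
  ∏ k : I, ∏ l : J, (if b k l then Q k l else 1 - Q k l)

/-- The 0/1 matrix associated with a Boolean array. -/
def boolMatrix {I J : Type*} (b : I → J → Bool) : Matrix I J ℝ :=
  Matrix.of fun k l => if b k l then (1 : ℝ) else 0

/-- The symmetric dilation of a matrix. -/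
def dilation {α β R : Type*} [Zero R] (A : Matrix α β R) :
    Matrix (α ⊕ β) (α ⊕ β) R :=
  Matrix.fromBlocks 0 A Aᵀ 0

/-!
Swapping the two columns `x` and `y` of the Boolean array `b` relabels the dilated matrix
`D(b̂)` by the transposition of `inr x` and `inr y`. Since the two columns have the same
edge probabilities, this relabelling preserves the Bernoulli mass, and by label invariance it
exchanges the laws of the embedded positions of `inr x` and `inr y`; summing over `b` gives the
claim.
-/

theorem PMF.map_eq_map_of_forall_preimage_singleton {Ω X : Type*} {μ : PMF Ω} {G H : Ω → X}
    (h : ∀ x, μ.toOuterMeasure (G ⁻¹' {x}) = μ.toOuterMeasure (H ⁻¹' {x})) :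
    μ.map G = μ.map H :=
  PMF.ext fun x => by
    rw [← toOuterMeasure_apply_singleton, ← toOuterMeasure_apply_singleton,
      toOuterMeasure_map_apply, toOuterMeasure_map_apply, h]

theorem bernoulliMass_comp_perm {I J : Type*} [Fintype I] [Fintype J] {Q : I → J → ℝ}
    {σ : Equiv.Perm J} (hσ : ∀ k l, Q k (σ l) = Q k l) (b : I → J → Bool) :
    bernoulliMass Q (fun k l => b k (σ l)) = bernoulliMass Q b :=
  Finset.prod_congr rfl fun k _ => by
    simpa only [hσ] using Equiv.prod_comp σ fun l => if b k l then Q k l else 1 - Q k l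

theorem dilation_submatrix {α β γ δ R : Type*} [Zero R] (A : Matrix α β R) (f : γ → α)
    (g : δ → β) :
    dilation (A.submatrix f g) = (dilation A).submatrix (Sum.map f g) (Sum.map f g) := by
  ext (x | x) (y | y) <;> rfl

def IsLabelInvariant {ι R V Ω : Type*} (μ : PMF Ω) (F : Matrix ι ι R → Ω → ι → V) : Prop :=
  ∀ (a : Matrix ι ι R) (e : Equiv.Perm ι) (v : ι → V),
    μ.toOuterMeasure {ω | F a ω = v} = μ.toOuterMeasure {ω | F (a.submatrix e e) ω = v ∘ e}

namespace IsLabelInvariant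

section

variable {ι R V Ω : Type*} {μ : PMF Ω} {F : Matrix ι ι R → Ω → ι → V}

theorem map_submatrix (hF : IsLabelInvariant μ F) (a : Matrix ι ι R) (e : Equiv.Perm ι) :
    μ.map (F (a.submatrix e e)) = μ.map fun ω => F a ω ∘ e := by
  refine PMF.map_eq_map_of_forall_preimage_singleton fun v => ?_
  have h := hF a e (v ∘ e.symm)
  rw [Function.comp_assoc, Equiv.symm_comp_self, Function.comp_id] at h
  simp only [Set.preimage, Set.mem_singleton_iff]
  rw [← h]
  simp only [Equiv.eq_comp_symm]

theorem toOuterMeasure_submatrix (hF : IsLabelInvariant μ F) (a : Matrix ι ι R)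
    (e : Equiv.Perm ι) (S : Set (ι → V)) :
    μ.toOuterMeasure {ω | F (a.submatrix e e) ω ∈ S}
      = μ.toOuterMeasure {ω | F a ω ∘ e ∈ S} := by
  have h := congrArg (fun p => PMF.toOuterMeasure p S) (hF.map_submatrix a e)
  rwa [PMF.toOuterMeasure_map_apply, PMF.toOuterMeasure_map_apply] at h

end

section

variable {I J V Ω : Type*} [Fintype I] [Fintype J] [DecidableEq I] [DecidableEq J] {μ : PMF Ω}
  {F : Matrix (I ⊕ J) (I ⊕ J) ℝ → Ω → I ⊕ J → V} {Q : I → J → ℝ}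

theorem sum_bernoulliMass_mul_comp_perm (hF : IsLabelInvariant μ F) {σ : Equiv.Perm J}
    (hσ : ∀ k l, Q k (σ l) = Q k l) (S : Set (I ⊕ J → V)) :
    ∑ b : I → J → Bool, ENNReal.ofReal (bernoulliMass Q b) *
        μ.toOuterMeasure {ω | F (dilation (boolMatrix b)) ω ∈ S}
      = ∑ b : I → J → Bool, ENNReal.ofReal (bernoulliMass Q b) *
        μ.toOuterMeasure
          {ω | F (dilation (boolMatrix b)) ω ∘ Equiv.sumCongr (Equiv.refl I) σ ∈ S} := by
  -- `b ↦ fun k l => b k (σ l)`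
  let permColumns : Equiv.Perm (I → J → Bool) :=
    Equiv.piCongrRight fun _ => σ.symm.arrowCongr (Equiv.refl Bool)
  rw [← Equiv.sum_comp permColumns]
  refine Fintype.sum_congr _ _ fun b => ?_
  have hmat : dilation (boolMatrix (permColumns b))
      = (dilation (boolMatrix b)).submatrix (Equiv.sumCongr (Equiv.refl I) σ)
          (Equiv.sumCongr (Equiv.refl I) σ) :=
    dilation_submatrix (boolMatrix b) id σ
  have hmass : bernoulliMass Q (permColumns b) = bernoulliMass Q b :=
    bernoulliMass_comp_perm hσ b
  rw [hmass, hmat, hF.toOuterMeasure_submatrix]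

theorem sum_bernoulliMass_mul_swap (hF : IsLabelInvariant μ F) {x y : J}
    (hxy : ∀ k, Q k x = Q k y) (v₁ v₂ : V) :
    ∑ b : I → J → Bool, ENNReal.ofReal (bernoulliMass Q b) *
        μ.toOuterMeasure {ω | F (dilation (boolMatrix b)) ω (Sum.inr x) = v₁ ∧
          F (dilation (boolMatrix b)) ω (Sum.inr y) = v₂}
      = ∑ b : I → J → Bool, ENNReal.ofReal (bernoulliMass Q b) *
        μ.toOuterMeasure {ω | F (dilation (boolMatrix b)) ω (Sum.inr x) = v₂ ∧
          F (dilation (boolMatrix b)) ω (Sum.inr y) = v₁} := by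
  have hσ : ∀ k l, Q k (Equiv.swap x y l) = Q k l := by
    intro k l
    rw [Equiv.swap_apply_def]
    split_ifs with hx hy
    · rw [hx, hxy]
    · rw [hy, hxy]
    · rfl
  convert hF.sum_bernoulliMass_mul_comp_perm hσ
    {g | g (Sum.inr x) = v₁ ∧ g (Sum.inr y) = v₂} using 6 <;> simp [and_comm]

end

end IsLabelInvariant

theorem stability_of_dilated_unfolded_embedding_general
    (n T d : ℕ)
    {Ω : Type*} (μ : PMF Ω)
    (F : Matrix (Fin n ⊕ (Fin T × Fin n)) (Fin n ⊕ (Fin T × Fin n)) ℝ → Ω →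
      ((Fin n ⊕ (Fin T × Fin n)) → (Fin d → ℝ)))
    (hF : ∀ (a : Matrix (Fin n ⊕ (Fin T × Fin n)) (Fin n ⊕ (Fin T × Fin n)) ℝ)
        (e : Equiv.Perm (Fin n ⊕ (Fin T × Fin n)))
        (v : (Fin n ⊕ (Fin T × Fin n)) → Fin d → ℝ),
      μ.toOuterMeasure {ω | F a ω = v}
        = μ.toOuterMeasure {ω | F (a.submatrix e e) ω = v ∘ e})
    (P : Fin T → Matrix (Fin n) (Fin n) ℝ)
    (Q : Fin n → (Fin T × Fin n) → ℝ)
    (hQ : ∀ (k : Fin n) (l : Fin T × Fin n), Q k l = P l.1 k l.2)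
    (u t : Fin T) (i j : Fin n)
    (hij : ∀ k : Fin n, P u k i = P t k j)
    (v₁ v₂ : Fin d → ℝ) :
    ∑ b : Fin n → (Fin T × Fin n) → Bool,
        ENNReal.ofReal (bernoulliMass Q b) *
          μ.toOuterMeasure
            {ω | F (dilation (boolMatrix b)) ω (Sum.inr (u, i)) = v₁ ∧
                 F (dilation (boolMatrix b)) ω (Sum.inr (t, j)) = v₂}
      = ∑ b : Fin n → (Fin T × Fin n) → Bool,
        ENNReal.ofReal (bernoulliMass Q b) *
          μ.toOuterMeasure
            {ω | F (dilation (boolMatrix b)) ω (Sum.inr (u, i)) = v₂ ∧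
                 F (dilation (boolMatrix b)) ω (Sum.inr (t, j)) = v₁} := by
  have hcols : ∀ k, Q k (u, i) = Q k (t, j) := fun k => by rw [hQ, hQ]; exact hij k
  exact IsLabelInvariant.sum_bernoulliMass_mul_swap hF hcols v₁ v₂

/-- Stability of dilated unfolded embeddings (Theorem 1,
instantiated to the inhomogeneous Bernoulli dynamic network model).
If the label-invariant embedding `F` is applied to the dilated unfolded
adjacency matrix of a dynamic network whose entries are independent
Bernoulli(`P t k i`), and node `i` at time `u` has the same edge-probability
vector as node `j` at time `t`, then their embedded positions are
exchangeable. Taking `u = t` gives spatial stability, and taking `i = j`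
gives temporal stability. -/
theorem stability_of_dilated_unfolded_embedding
    (n T d : ℕ) (hn : 0 < n) (hT : 0 < T) (hd : 0 < d)
    {Ω : Type*} [Countable Ω] (μ : PMF Ω)
    (F : Matrix (Fin n ⊕ (Fin T × Fin n)) (Fin n ⊕ (Fin T × Fin n)) ℝ → Ω →
      ((Fin n ⊕ (Fin T × Fin n)) → (Fin d → ℝ)))
    (hF : ∀ (a : Matrix (Fin n ⊕ (Fin T × Fin n)) (Fin n ⊕ (Fin T × Fin n)) ℝ)
        (e : Equiv.Perm (Fin n ⊕ (Fin T × Fin n)))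
        (v : (Fin n ⊕ (Fin T × Fin n)) → Fin d → ℝ),
      μ.toOuterMeasure {ω | F a ω = v}
        = μ.toOuterMeasure {ω | F (a.submatrix e e) ω = v ∘ e})
    (P : Fin T → Matrix (Fin n) (Fin n) ℝ)
    (hP : ∀ (t : Fin T) (k i : Fin n), 0 ≤ P t k i ∧ P t k i ≤ 1)
    (Q : Fin n → (Fin T × Fin n) → ℝ)
    (hQ : ∀ (k : Fin n) (l : Fin T × Fin n), Q k l = P l.1 k l.2)
    (u t : Fin T) (i j : Fin n)
    (hij : ∀ k : Fin n, P u k i = P t k j)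
    (v₁ v₂ : Fin d → ℝ) :
    ∑ b : Fin n → (Fin T × Fin n) → Bool,
        ENNReal.ofReal (bernoulliMass Q b) *
          μ.toOuterMeasure
            {ω | F (dilation (boolMatrix b)) ω (Sum.inr (u, i)) = v₁ ∧
                 F (dilation (boolMatrix b)) ω (Sum.inr (t, j)) = v₂}
      = ∑ b : Fin n → (Fin T × Fin n) → Bool,
        ENNReal.ofReal (bernoulliMass Q b) *
          μ.toOuterMeasure
            {ω | F (dilation (boolMatrix b)) ω (Sum.inr (u, i)) = v₂ ∧
                 F (dilation (boolMatrix b)) ω (Sum.inr (t, j)) = v₁} :=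
  stability_of_dilated_unfolded_embedding_general n T d μ F hF P Q hQ u t i j hij v₁ v₂
end

section
/- Abstract form of Theorem 1 (exchangeability of two rows). Let ι be a finite type, Ω a countable type with μ : PMF Ω, d a natural number, and F : Matrix ι ι ℝ → Ω → (ι → (Fin d → ℝ)) label-invariant with respect to μ. Let ν : PMF (Matrix ι ι ℝ) and let p, q : ι be distinct. Suppose ν is invariant under conjugation by the transposition e = Equiv.swap p q, i.e., ν (a.submatrix e e) = ν a for every a : Matrix ι ι ℝ. Then for all v₁, v₂ : Fin d → ℝ, ∑'_{a} ν a · μ.toOuterMeasure {ω | F a ω p = v₁ ∧ F a ω q = v₂} = ∑'_{a} ν a · μ.toOuterMeasure {ω | F a ω p = v₂ ∧ F a ω q = v₁}; that is, the embedded positions of rows p and q are exchangeable. -/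
/-!
Label invariance with the transposition `e = (p q)` turns the event
`{row p = v₁, row q = v₂}` for the matrix `a` into the swapped event for the relabelled matrix
`a.submatrix e e`. Since `ν` is invariant under the involution `a ↦ a.submatrix e e`,
reindexing the sum over `a` by it yields the claim.
-/

open Set

theorem PMF.map_symm_eq_of_apply_eq {β γ : Type*} {P : PMF β} {Q : PMF γ} (σ : β ≃ γ)
    (h : ∀ v, P v = Q (σ v)) : Q.map σ.symm = P := by
  ext v
  rw [← toOuterMeasure_apply_singleton, toOuterMeasure_map_apply, ← σ.image_eq_preimage_symm,
    image_singleton, toOuterMeasure_apply_singleton, h]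

theorem PMF.toOuterMeasure_preimage_eq_preimage_image {α β γ : Type*} (μ : PMF α)
    {g : α → β} {h : α → γ} (σ : β ≃ γ)
    (hgh : ∀ v, μ.toOuterMeasure (g ⁻¹' {v}) = μ.toOuterMeasure (h ⁻¹' {σ v})) (T : Set β) :
    μ.toOuterMeasure (g ⁻¹' T) = μ.toOuterMeasure (h ⁻¹' (σ '' T)) := by
  have hmap : (μ.map h).map σ.symm = μ.map g :=
    map_symm_eq_of_apply_eq σ fun v => by
      simpa only [← toOuterMeasure_apply_singleton, toOuterMeasure_map_apply] using hgh v
  rw [← toOuterMeasure_map_apply, ← hmap, toOuterMeasure_map_apply, toOuterMeasure_map_apply,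
    σ.image_eq_preimage_symm]

theorem abstract_exchangeability_of_rows_general
    {ι : Type*} [DecidableEq ι]
    {Ω : Type*} (μ : PMF Ω) (d : ℕ)
    (F : Matrix ι ι ℝ → Ω → (ι → (Fin d → ℝ)))
    (hF : ∀ (a : Matrix ι ι ℝ) (e : Equiv.Perm ι) (v : ι → Fin d → ℝ),
      μ.toOuterMeasure {ω | F a ω = v}
        = μ.toOuterMeasure {ω | F (a.submatrix e e) ω = v ∘ e})
    (ν : PMF (Matrix ι ι ℝ)) (p q : ι)
    (hν : ∀ a : Matrix ι ι ℝ,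
      ν (a.submatrix (Equiv.swap p q) (Equiv.swap p q)) = ν a)
    (v₁ v₂ : Fin d → ℝ) :
    ∑' a : Matrix ι ι ℝ,
        ν a * μ.toOuterMeasure {ω | F a ω p = v₁ ∧ F a ω q = v₂}
      = ∑' a : Matrix ι ι ℝ,
        ν a * μ.toOuterMeasure {ω | F a ω p = v₂ ∧ F a ω q = v₁} := by
  set e := Equiv.swap p q
  have hswap : ∀ a : Matrix ι ι ℝ, μ.toOuterMeasure {ω | F a ω p = v₁ ∧ F a ω q = v₂}
      = μ.toOuterMeasure
          {ω | F (a.submatrix e e) ω p = v₂ ∧ F (a.submatrix e e) ω q = v₁} := fun a => by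
    refine (μ.toOuterMeasure_preimage_eq_preimage_image (Equiv.arrowCongr e.symm (Equiv.refl _))
      (hF a e) {v | v p = v₁ ∧ v q = v₂}).trans (congrArg _ ?_)
    ext ω
    rw [mem_preimage, Equiv.image_eq_preimage_symm]
    simp [e, and_comm]
  calc _ = ∑' a : Matrix ι ι ℝ, ν (a.submatrix e e) * μ.toOuterMeasure
          {ω | F (a.submatrix e e) ω p = v₂ ∧ F (a.submatrix e e) ω q = v₁} := by
        simp only [hswap, hν]
    _ = _ := (Matrix.reindex e e).tsum_eq
        fun a => ν a * μ.toOuterMeasure {ω | F a ω p = v₂ ∧ F a ω q = v₁}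

/-- Abstract form of Theorem 1 (exchangeability of two rows).
If `F` is a label-invariant randomized network embedding and the law `ν` of the
random adjacency matrix is invariant under conjugation by the transposition of
`p` and `q`, then the embedded positions of rows `p` and `q` are exchangeable. -/
theorem abstract_exchangeability_of_rows
    {ι : Type*} [Fintype ι] [DecidableEq ι]
    {Ω : Type*} [Countable Ω] (μ : PMF Ω) (d : ℕ)
    (F : Matrix ι ι ℝ → Ω → (ι → (Fin d → ℝ)))
    (hF : ∀ (a : Matrix ι ι ℝ) (e : Equiv.Perm ι) (v : ι → Fin d → ℝ),
      μ.toOuterMeasure {ω | F a ω = v}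
        = μ.toOuterMeasure {ω | F (a.submatrix e e) ω = v ∘ e})
    (ν : PMF (Matrix ι ι ℝ)) (p q : ι) (hpq : p ≠ q)
    (hν : ∀ a : Matrix ι ι ℝ,
      ν (a.submatrix (Equiv.swap p q) (Equiv.swap p q)) = ν a)
    (v₁ v₂ : Fin d → ℝ) :
    ∑' a : Matrix ι ι ℝ,
        ν a * μ.toOuterMeasure {ω | F a ω p = v₁ ∧ F a ω q = v₂}
      = ∑' a : Matrix ι ι ℝ,
        ν a * μ.toOuterMeasure {ω | F a ω p = v₂ ∧ F a ω q = v₁} :=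
  abstract_exchangeability_of_rows_general μ d F hF ν p q hν v₁ v₂
end
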